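/- Let A be a C*-algebra, (X, Σ) a measurable space, and m a state-valued vector measure on (X, Σ): m maps measurable sets to continuous linear functionals on A, m(∅) = 0, m is countably additive in the dual norm, and for every measurable S and every a ∈ A with 0 ≤ a the value (m S)(a) is a nonnegative real number. For each a ∈ A with 0 ≤ a, let μ_a denote the finite measure on (X, Σ) given by μ_a(S) = (m S)(a), and let m̂ denote the norm measure, the finite measure with m̂(S) = ‖m(S)‖. If f : X → [0, ∞) is measurable and ∫_X f dμ_a < ∞ for every a ∈ A with 0 ≤ a, then ∫_X f dm̂ < ∞. -/

import Mathlib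

/-!
A positive functional `φ` on a unital C⋆-algebra attains its norm at the unit: Cauchy–Schwarz for
the semi-inner product `⟪x, y⟫ = φ (x⋆ y)` gives `|φ x|² ≤ φ 1 · φ (x⋆ x) ≤ φ 1 · ‖φ‖ · ‖x‖²`,
hence `‖φ‖ ≤ φ 1 ≤ ‖φ‖`. Applied to every `m S`, this shows that `m̂` is the scalar measure `μ_1`,
and the hypothesis at `a = 1` is the conclusion.
-/

open scoped Function ComplexOrder
open MeasureTheory

namespace LinearMap

variable {A : Type*} [Ring A] [StarRing A] [PartialOrder A] [StarOrderedRing A]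
  [Algebra ℂ A] (φ : A →ₗ[ℂ] ℂ) (hφ : ∀ a, 0 ≤ a → 0 ≤ φ a)
include hφ

theorem im_apply_star_mul_self_eq_zero (x : A) : (φ (star x * x)).im = 0 :=
  (Complex.nonneg_iff.mp (hφ _ (star_mul_self_nonneg x))).2.symm

theorem im_apply_add_im_apply_star_eq_zero (y : A) : (φ y).im + (φ (star y)).im = 0 := by
  have hy : y + star y = star (1 + y) * (1 + y) - star 1 * 1 - star y * y := by
    simp only [star_add, star_one, add_mul, mul_add, one_mul, mul_one]
    abel
  have := congrArg Complex.im (congrArg φ hy)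
  simpa only [map_add, map_sub, Complex.add_im, Complex.sub_im,
    φ.im_apply_star_mul_self_eq_zero hφ, sub_zero] using this

variable [StarModule ℂ A]

theorem apply_star_eq_conj (x : A) : φ (star x) = starRingEnd ℂ (φ x) := by
  have him := φ.im_apply_add_im_apply_star_eq_zero hφ x
  -- the same identity for `I • x` controls the real parts
  have hre := φ.im_apply_add_im_apply_star_eq_zero hφ (Complex.I • x)
  rw [star_smul, map_smul, map_smul, Complex.star_def, Complex.conj_I] at hre
  simp only [smul_eq_mul, Complex.mul_im, Complex.neg_re, Complex.neg_im, Complex.I_re,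
    Complex.I_im] at hre
  apply Complex.ext <;> simp only [Complex.conj_re, Complex.conj_im] <;> linarith

abbrev preInnerProductCoreOfNonneg : PreInnerProductSpace.Core ℂ A where
  inner x y := φ (star x * y)
  conj_inner_symm x y := by
    rw [← φ.apply_star_eq_conj hφ, star_mul, star_star]
  re_inner_nonneg x := (Complex.nonneg_iff.mp (hφ _ (star_mul_self_nonneg x))).1
  add_left x y z := by simp only [star_add, add_mul, map_add]
  smul_left x y r := by
    simp only [star_smul, smul_mul_assoc, map_smul, smul_eq_mul, Complex.star_def]

theorem norm_apply_sq_le_re_apply_one_mul (x : A) :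
    ‖φ x‖ ^ 2 ≤ (φ 1).re * (φ (star x * x)).re := by
  have h := InnerProductSpace.Core.inner_mul_inner_self_le
    (c := φ.preInnerProductCoreOfNonneg hφ) (1 : A) x
  change ‖φ (star 1 * x)‖ * ‖φ (star x * 1)‖ ≤ (φ (star 1 * 1)).re * (φ (star x * x)).re at h
  rwa [star_one, mul_one, one_mul, one_mul, φ.apply_star_eq_conj hφ, Complex.norm_conj,
    ← sq] at h

end LinearMap

theorem CStarRing.norm_one_le {A : Type*} [NormedRing A] [StarRing A] [CStarRing A] :
    ‖(1 : A)‖ ≤ 1 := by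
  rcases subsingleton_or_nontrivial A with _ | _
  · simp [Subsingleton.elim (1 : A) 0]
  · exact CStarRing.norm_one.le

theorem ContinuousLinearMap.norm_eq_re_apply_one_of_nonneg
    {A : Type*} [NormedRing A] [StarRing A] [CStarRing A]
    [NormedAlgebra ℂ A] [StarModule ℂ A] [PartialOrder A] [StarOrderedRing A]
    (φ : A →L[ℂ] ℂ) (hφ : ∀ a, 0 ≤ a → 0 ≤ φ a) : ‖φ‖ = (φ 1).re := by
  set p := (φ 1).re
  have hp : 0 ≤ p := (Complex.nonneg_iff.mp (hφ 1 zero_le_one)).1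
  have hbound : ∀ x, ‖φ x‖ ≤ √(p * ‖φ‖) * ‖x‖ := fun x => by
    rw [← Real.sqrt_sq (norm_nonneg x), ← Real.sqrt_mul (by positivity)]
    refine Real.le_sqrt_of_sq_le ?_
    calc ‖φ x‖ ^ 2 ≤ p * (φ (star x * x)).re :=
        φ.toLinearMap.norm_apply_sq_le_re_apply_one_mul hφ x
      _ ≤ p * (‖φ‖ * ‖x‖ ^ 2) := by
        gcongr
        calc (φ (star x * x)).re ≤ ‖φ (star x * x)‖ := Complex.re_le_norm _
          _ ≤ ‖φ‖ * ‖star x * x‖ := φ.le_opNorm _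
          _ = ‖φ‖ * ‖x‖ ^ 2 := by rw [CStarRing.norm_star_mul_self, sq]
      _ = p * ‖φ‖ * ‖x‖ ^ 2 := by ring
  have hle : ‖φ‖ ^ 2 ≤ p * ‖φ‖ :=
    (Real.le_sqrt (norm_nonneg _) (by positivity)).mp
      (φ.opNorm_le_bound (Real.sqrt_nonneg _) hbound)
  have hge : p ≤ ‖φ‖ :=
    calc p ≤ ‖φ 1‖ := Complex.re_le_norm _
      _ ≤ ‖φ‖ * ‖(1 : A)‖ := φ.le_opNorm 1
      _ ≤ ‖φ‖ := mul_le_of_le_one_right (norm_nonneg _) CStarRing.norm_one_le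
  nlinarith

theorem integrable_norm_measure_of_integrable_scalar_general
    {A : Type*} [NormedRing A] [StarRing A] [CStarRing A]
    [NormedAlgebra ℂ A] [StarModule ℂ A] [PartialOrder A] [StarOrderedRing A]
    {X : Type*} [MeasurableSpace X]
    (m : Set X → StrongDual ℂ A)
    (hpos : ∀ S : Set X, MeasurableSet S → ∀ a : A, 0 ≤ a →
      ∃ r : ℝ, 0 ≤ r ∧ m S a = (r : ℂ))
    (μa : A → Measure X)
    (hμa : ∀ a : A, 0 ≤ a → ∀ S : Set X, MeasurableSet S →
      μa a S = ENNReal.ofReal (m S a).re)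
    (mhat : Measure X)
    (hmhat : ∀ S : Set X, MeasurableSet S → mhat S = ENNReal.ofReal ‖m S‖)
    (f : X → ℝ)
    (hint : ∀ a : A, 0 ≤ a → ∫⁻ x, ENNReal.ofReal (f x) ∂(μa a) < ⊤) :
    ∫⁻ x, ENNReal.ofReal (f x) ∂mhat < ⊤ := by
  have hnonneg : ∀ S, MeasurableSet S → ∀ a : A, 0 ≤ a → 0 ≤ m S a := fun S hS a ha => by
    obtain ⟨r, hr, hSa⟩ := hpos S hS a ha
    exact hSa ▸ Complex.zero_le_real.mpr hr
  have hmhat_eq : mhat = μa 1 := Measure.ext fun S hS => by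
    rw [hmhat S hS, hμa 1 zero_le_one S hS,
      (m S).norm_eq_re_apply_one_of_nonneg (hnonneg S hS)]
  exact hmhat_eq ▸ hint 1 zero_le_one

/-- A nonnegative measurable function integrable against every scalar measure
`μ_a(S) = (m S)(a)` (for `a ≥ 0`) is integrable against the norm measure
`m̂(S) = ‖m S‖` of the state-valued measure `m`. -/
theorem integrable_norm_measure_of_integrable_scalar
    {A : Type*} [NormedRing A] [StarRing A] [CStarRing A]
    [NormedAlgebra ℂ A] [StarModule ℂ A] [PartialOrder A] [StarOrderedRing A]
    {X : Type*} [MeasurableSpace X]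
    (m : Set X → StrongDual ℂ A)
    (hempty : m ∅ = 0)
    (hadd : ∀ S : ℕ → Set X, (∀ n, MeasurableSet (S n)) → Pairwise (Disjoint on S) →
      HasSum (fun n => m (S n)) (m (⋃ n, S n)))
    (hpos : ∀ S : Set X, MeasurableSet S → ∀ a : A, 0 ≤ a →
      ∃ r : ℝ, 0 ≤ r ∧ m S a = (r : ℂ))
    (μa : A → Measure X)
    (hμa : ∀ a : A, 0 ≤ a → ∀ S : Set X, MeasurableSet S →
      μa a S = ENNReal.ofReal (m S a).re)
    (mhat : Measure X)
    (hmhat : ∀ S : Set X, MeasurableSet S → mhat S = ENNReal.ofReal ‖m S‖)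
    (f : X → ℝ) (hfmeas : Measurable f) (hf0 : ∀ x, 0 ≤ f x)
    (hint : ∀ a : A, 0 ≤ a → ∫⁻ x, ENNReal.ofReal (f x) ∂(μa a) < ⊤) :
    ∫⁻ x, ENNReal.ofReal (f x) ∂mhat < ⊤ :=
  integrable_norm_measure_of_integrable_scalar_general m hpos μa hμa mhat hmhat f hint
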